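/- arXiv:1611.03310 — 4 statements merged into one kernel-verified Lean document; each statement's English description precedes it below -/
import Mathlib

section
/- For all positive integers n1, n2 with n1 > 1, n2 > 1 and gcd(n1, n2) = 1, the Jacobsthal function satisfies j(n1·n2) > j(n1) and j(n1·n2) > j(n2). -/
/-- The Jacobsthal function: the least positive `m` such that every sequence of
`m` consecutive integers contains an integer coprime to `n`. -/
noncomputable def J (n : ℕ) : ℕ :=
  sInf {m : ℕ | 0 < m ∧ ∀ a : ℤ, ∃ q : ℕ, 1 ≤ q ∧ q ≤ m ∧ Int.gcd (a + q) n = 1}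

/-- The `n`-th primorialP: product of the first `n` primes. -/
noncomputable def primorialP (n : ℕ) : ℕ := ∏ i ∈ Finset.range n, Nat.nth Nat.Prime i

lemma self_mem_JSet (n : ℕ) (hn : 0 < n) :
    n ∈ {m : ℕ | 0 < m ∧ ∀ a : ℤ, ∃ q : ℕ, 1 ≤ q ∧ q ≤ m ∧ Int.gcd (a + q) n = 1} := by
  refine ⟨hn, fun a => ?_⟩
  have hn' : (0:ℤ) < (n:ℤ) := by exact_mod_cast hn
  set r : ℤ := (a - 1) % (n:ℤ) with hrdef
  have hr0 : 0 ≤ r := Int.emod_nonneg _ (by omega)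
  have hrlt : r < (n:ℤ) := Int.emod_lt_of_pos _ hn'
  refine ⟨n - r.toNat, by omega, by omega, ?_⟩
  rw [← Int.isCoprime_iff_gcd_eq_one]
  have hq : (↑(n - r.toNat) : ℤ) = (n:ℤ) - r := by
    have : r.toNat ≤ n := by omega
    push_cast [this, Int.toNat_of_nonneg hr0]
    ring
  have key : a + (↑(n - r.toNat) : ℤ) = 1 + (n:ℤ) * ((a - 1) / (n:ℤ) + 1) := by
    rw [hq, hrdef, Int.emod_def]; ring
  rw [key]
  exact (isCoprime_one_left).add_mul_left_left _

lemma J_mem (n : ℕ) (hn : 0 < n) :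
    J n ∈ {m : ℕ | 0 < m ∧ ∀ a : ℤ, ∃ q : ℕ, 1 ≤ q ∧ q ≤ m ∧ Int.gcd (a + q) n = 1} :=
  Nat.sInf_mem ⟨n, self_mem_JSet n hn⟩

lemma two_le_J (n : ℕ) (hn : 1 < n) : 2 ≤ J n := by
  have hmem := J_mem n (by omega)
  have h1 : (1 : ℕ) ∉ {m : ℕ | 0 < m ∧ ∀ a : ℤ, ∃ q : ℕ,
      1 ≤ q ∧ q ≤ m ∧ Int.gcd (a + q) n = 1} := by
    rintro ⟨-, h⟩
    obtain ⟨q, hq1, hq2, hg⟩ := h ((n:ℤ) - 1)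
    have hq : q = 1 := by omega
    subst hq
    have : (n:ℤ) - 1 + (1:ℕ) = (n:ℤ) := by push_cast; ring
    rw [this] at hg
    have : Int.gcd (n:ℤ) (n:ℤ) = n := by simp [Int.gcd_self]
    omega
  have : J n ≠ 1 := fun h => h1 (h ▸ hmem)
  have : 0 < J n := hmem.1
  omega

lemma J_lt_J_mul (n1 n2 : ℕ) (h1 : 1 < n1) (h2 : 1 < n2) (hco : Nat.Coprime n1 n2) :
    J n1 < J (n1 * n2) := by
  by_contra hle
  push_neg at hle
  set m := J n1 with hm
  have hm2 : 2 ≤ m := two_le_J n1 h1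
  -- m works for n1 * n2
  have hmul := J_mem (n1 * n2) (by positivity)
  have hP : ∀ a : ℤ, ∃ q : ℕ, 1 ≤ q ∧ q ≤ m ∧ Int.gcd (a + q) (n1 * n2) = 1 := by
    intro a
    obtain ⟨q, hq1, hq2, hg⟩ := hmul.2 a
    exact ⟨q, hq1, le_trans hq2 hle, hg⟩
  -- m - 1 fails for n1
  have hnotmem : (m - 1) ∉ {k : ℕ | 0 < k ∧ ∀ a : ℤ, ∃ q : ℕ,
      1 ≤ q ∧ q ≤ k ∧ Int.gcd (a + q) n1 = 1} :=
    Nat.notMem_of_lt_sInf (show m - 1 < J n1 by omega)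
  have hfail : ∃ a : ℤ, ∀ q : ℕ, 1 ≤ q → q ≤ m - 1 → Int.gcd (a + q) n1 ≠ 1 := by
    by_contra hc
    push_neg at hc
    exact hnotmem ⟨by omega, fun a => by
      obtain ⟨q, hq1, hq2, hg⟩ := hc a
      exact ⟨q, hq1, hq2, hg⟩⟩
  obtain ⟨a, ha⟩ := hfail
  -- prime p dividing n2
  obtain ⟨p, hp, hpd⟩ := Nat.exists_prime_and_dvd (n := n2) (by omega)
  have hco' : Nat.Coprime n1 p := Nat.Coprime.coprime_dvd_right hpd hco
  have hcoZ : IsCoprime (n1 : ℤ) (p : ℤ) := by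
    rw [Int.isCoprime_iff_gcd_eq_one]
    exact_mod_cast hco'
  obtain ⟨u, v, huv⟩ := hcoZ
  -- b ≡ a mod n1, b ≡ -m mod p
  set b : ℤ := a + (-(m:ℤ) - a) * (u * (n1:ℤ)) with hb
  obtain ⟨q, hq1, hq2, hg⟩ := hP b
  have hgco : IsCoprime (b + (q:ℤ)) ((n1:ℤ) * (n2:ℤ)) := by
    rw [Int.isCoprime_iff_gcd_eq_one,
      show ((n1:ℤ) * (n2:ℤ)) = ((n1 * n2 : ℕ) : ℤ) by push_cast; ring]
    exact hg
  by_cases hqm : q ≤ m - 1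
  · -- contradiction with ha
    apply ha q hq1 hqm
    rw [← Int.isCoprime_iff_gcd_eq_one]
    have hco1 : IsCoprime (b + (q:ℤ)) (n1:ℤ) := hgco.of_mul_right_left
    have hrw : a + (q:ℤ) = (b + (q:ℤ)) + (n1:ℤ) * (-((-(m:ℤ) - a) * u)) := by
      rw [hb]; ring
    rw [hrw]
    exact hco1.add_mul_left_left _
  · have hq' : q = m := by omega
    subst hq'
    -- p divides b + m
    have hdvd : (p:ℤ) ∣ (b + (m:ℤ)) := by
      have heq : b + (m:ℤ) = (p:ℤ) * (((m:ℤ) + a) * v) := by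
        rw [hb]
        have : u * (n1:ℤ) = 1 - v * (p:ℤ) := by linarith [huv]
        rw [this]; ring
      exact ⟨_, heq⟩
    have hcop : IsCoprime (b + (m:ℤ)) (p:ℤ) := by
      have hd2 : (p:ℤ) ∣ (n1:ℤ) * (n2:ℤ) :=
        Dvd.dvd.mul_left (by exact_mod_cast hpd) _
      exact IsCoprime.of_isCoprime_of_dvd_right hgco hd2
    have : IsUnit ((p:ℤ)) := hcop.isUnit_of_dvd' hdvd dvd_rfl
    rw [Int.isUnit_iff] at this
    have hp2 := hp.two_le
    omega

theorem stmt_2 (n1 n2 : ℕ) (h1 : 1 < n1) (h2 : 1 < n2) (hco : Nat.Coprime n1 n2) :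
    J n1 < J (n1 * n2) ∧ J n2 < J (n1 * n2) := by
  constructor
  · exact J_lt_J_mul n1 n2 h1 h2 hco
  · have := J_lt_J_mul n2 n1 h2 h1 hco.symm
    rwa [Nat.mul_comm] at this
end

section
/- If n is an odd positive integer, then j(2n) = 2·j(n), where j is the Jacobsthal function. -/
namespace JacobsthalAux

def S (n : ℕ) : Set ℕ :=
  {m : ℕ | 0 < m ∧ ∀ a : ℤ, ∃ q : ℕ, 1 ≤ q ∧ q ≤ m ∧ Int.gcd (a + q) n = 1}

lemma J_eq (n : ℕ) : J n = sInf (S n) := rfl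

lemma self_mem_S (n : ℕ) (hn : 0 < n) : n ∈ S n := by
  refine ⟨hn, fun a => ?_⟩
  have hn' : (0:ℤ) < n := by exact_mod_cast hn
  set r : ℤ := (1 - a) % n with hr
  have hr0 : 0 ≤ r := Int.emod_nonneg _ hn'.ne'
  have hrn : r < n := Int.emod_lt_of_pos _ hn'
  have hdvd : (1 - a) - r = (n:ℤ) * ((1 - a) / n) := by
    rw [hr, Int.emod_def]; ring
  by_cases h : r = 0
  · refine ⟨n, hn, le_refl _, ?_⟩
    have h1 : a + (n:ℤ) = 1 + (n:ℤ) * (1 - (1 - a) / n) := by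
      have := hdvd; rw [h] at this; linarith [this]
    rw [h1]
    rw [← Int.isCoprime_iff_gcd_eq_one]
    exact (isCoprime_one_left (x := (n:ℤ))).add_mul_left_left _
  · have hr1 : 1 ≤ r := by omega
    refine ⟨r.toNat, by omega, by omega, ?_⟩
    have htn : ((r.toNat : ℤ)) = r := Int.toNat_of_nonneg hr0
    have h1 : a + (r.toNat : ℤ) = 1 + (n:ℤ) * (-((1 - a) / n)) := by
      rw [htn]; linarith [hdvd]
    rw [h1, ← Int.isCoprime_iff_gcd_eq_one]
    exact (isCoprime_one_left (x := (n:ℤ))).add_mul_left_left _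

lemma J_mem (n : ℕ) (hn : 0 < n) : J n ∈ S n :=
  Nat.sInf_mem ⟨n, self_mem_S n hn⟩

lemma J_pos (n : ℕ) (hn : 0 < n) : 0 < J n := (J_mem n hn).1

lemma J_prop (n : ℕ) (hn : 0 < n) (a : ℤ) :
    ∃ q : ℕ, 1 ≤ q ∧ q ≤ J n ∧ Int.gcd (a + q) n = 1 := (J_mem n hn).2 a

lemma J_le (n : ℕ) {m : ℕ} (hm : m ∈ S n) : J n ≤ m := Nat.sInf_le hm

/-- A witness realizing a gap of length `J n - 1`. -/
lemma exists_witness (n : ℕ) (hn : 0 < n) :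
    ∃ a : ℤ, ∀ q : ℕ, 1 ≤ q → q ≤ J n - 1 → Int.gcd (a + q) n ≠ 1 := by
  by_contra hcon
  push_neg at hcon
  have h1 := hcon 0
  obtain ⟨q, hq1, hq2, _⟩ := h1
  have hJ1 : 1 ≤ J n - 1 := le_trans hq1 hq2
  have hmem : J n - 1 ∈ S n := by
    refine ⟨hJ1, fun a => ?_⟩
    obtain ⟨q, h1, h2, h3⟩ := hcon a
    exact ⟨q, h1, h2, h3⟩
  have := J_le n hmem
  have := J_pos n hn
  omega

lemma isCoprime_two_of_odd {x : ℤ} (hx : Odd x) : IsCoprime x (2:ℤ) := by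
  obtain ⟨k, hk⟩ := hx
  exact ⟨1, -k, by rw [hk]; ring⟩

lemma isCoprime_two_left {n : ℤ} (hn : Odd n) : IsCoprime (2:ℤ) n := by
  obtain ⟨k, hk⟩ := hn
  exact ⟨-k, 1, by rw [hk]; ring⟩

/-- Key step for `≤`: among `c + 2, c + 4, …, c + 2·J n` (viewed suitably)
there is an element coprime to odd `n`. -/
lemma exists_coprime_shift (n : ℕ) (hn : 0 < n) (k : ℕ) (hk : n = 2 * k + 1) (c : ℤ) :
    ∃ q : ℕ, 1 ≤ q ∧ q ≤ J n ∧ IsCoprime (c + 2 * (q:ℤ)) (n:ℤ) := by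
  obtain ⟨q, hq1, hq2, hq3⟩ := J_prop n hn (c * (k + 1))
  refine ⟨q, hq1, hq2, ?_⟩
  rw [← Int.isCoprime_iff_gcd_eq_one] at hq3
  have h2n : IsCoprime (2:ℤ) (n:ℤ) := by
    refine isCoprime_two_left ⟨(k:ℤ), ?_⟩
    rw [hk]; push_cast; ring
  have hcop : IsCoprime (2 * (c * (k + 1) + q)) (n:ℤ) := h2n.mul_left hq3
  have heq : c + 2 * (q:ℤ) = 2 * (c * (k + 1) + q) + (n:ℤ) * (-c) := by
    have : (n:ℤ) = 2 * (k:ℤ) + 1 := by rw [hk]; push_cast; ring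
    rw [this]; ring
  rw [heq]
  exact hcop.add_mul_left_left _

theorem main (n : ℕ) (hn : 0 < n) (hodd : Odd n) : J (2 * n) = 2 * J n := by
  obtain ⟨k, hk⟩ := hodd
  have hk' : n = 2 * k + 1 := hk
  have h2n : 0 < 2 * n := by omega
  have hJn := J_pos n hn
  have hcast : ((2 * n : ℕ) : ℤ) = 2 * (n:ℤ) := by push_cast; ring
  have hnodd : Odd ((n:ℤ)) := ⟨(k:ℤ), by rw [hk']; push_cast; ring⟩
  apply le_antisymm
  · -- J (2n) ≤ 2 J n
    apply J_le
    refine ⟨by omega, fun a => ?_⟩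
    rcases Int.even_or_odd a with ⟨t, ht⟩ | ⟨t, ht⟩
    · -- a even: use c = a - 1, q = 2 q' - 1
      obtain ⟨q', h1, h2, h3⟩ := exists_coprime_shift n hn k hk' (a - 1)
      refine ⟨2 * q' - 1, by omega, by omega, ?_⟩
      have hqc : ((2 * q' - 1 : ℕ) : ℤ) = 2 * (q' : ℤ) - 1 := by
        have : 1 ≤ 2 * q' := by omega
        push_cast [this]; ring
      have heq : a + ((2 * q' - 1 : ℕ) : ℤ) = (a - 1) + 2 * (q':ℤ) := by
        rw [hqc]; ring
      rw [heq, hcast, ← Int.isCoprime_iff_gcd_eq_one]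
      refine IsCoprime.mul_right ?_ h3
      refine isCoprime_two_of_odd ⟨t + (q':ℤ) - 1, ?_⟩
      rw [ht]; ring
    · -- a odd: use c = a, q = 2 q'
      obtain ⟨q', h1, h2, h3⟩ := exists_coprime_shift n hn k hk' a
      refine ⟨2 * q', by omega, by omega, ?_⟩
      have heq : a + ((2 * q' : ℕ) : ℤ) = a + 2 * (q':ℤ) := by push_cast; ring
      rw [heq, hcast, ← Int.isCoprime_iff_gcd_eq_one]
      refine IsCoprime.mul_right ?_ h3
      refine isCoprime_two_of_odd ⟨t + (q':ℤ), ?_⟩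
      rw [ht]; ring
  · -- 2 J n ≤ J (2n)
    obtain ⟨a, ha⟩ := exists_witness n hn
    obtain ⟨q, hq1, hq2, hq3⟩ := J_prop (2 * n) h2n (2 * a + n)
    suffices h : 2 * J n ≤ q by omega
    rw [hcast, ← Int.isCoprime_iff_gcd_eq_one] at hq3
    have hc2 : IsCoprime (2 * a + (n:ℤ) + q) 2 := (IsCoprime.mul_right_iff.mp hq3).1
    have hcn : IsCoprime (2 * a + (n:ℤ) + q) (n:ℤ) := (IsCoprime.mul_right_iff.mp hq3).2
    -- q must be even
    rcases Nat.even_or_odd q with ⟨r, hr⟩ | ⟨r, hr⟩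
    · -- q = 2r
      have hr1 : 1 ≤ r := by omega
      have heq : 2 * a + (n:ℤ) + q = 2 * (a + r) + (n:ℤ) * 1 := by
        rw [hr]; push_cast; rw [hk']; push_cast; ring
      have hcop : IsCoprime ((a:ℤ) + r) (n:ℤ) := by
        have h1 : IsCoprime (2 * (a + (r:ℤ))) (n:ℤ) := by
          have := hcn; rw [heq] at this
          exact IsCoprime.of_add_mul_left_left this
        exact h1.of_mul_left_right
      have hgcd : Int.gcd (a + (r:ℕ)) n = 1 := Int.isCoprime_iff_gcd_eq_one.mp hcop
      have := ha r hr1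
      by_contra hcon
      have hrle : r ≤ J n - 1 := by omega
      exact this hrle hgcd
    · -- q odd: contradiction, 2 ∣ 2a + n + q
      exfalso
      have hdvd : (2:ℤ) ∣ (2 * a + (n:ℤ) + q) := by
        refine ⟨a + k + r + 1, ?_⟩
        rw [hr, hk']; push_cast; ring
      have := hc2.isUnit_of_dvd' hdvd dvd_rfl
      rw [Int.isUnit_iff] at this
      omega

end JacobsthalAux

theorem stmt_5 (n : ℕ) (hn : 0 < n) (hodd : Odd n) :
    J (2 * n) = 2 * J n := JacobsthalAux.main n hn hodd
end

section
/- For n > 1, with h(n) = j(p_n#) the Jacobsthal function of the n-th primorial and ω(n) = j(p_n#/2) − 1, one has h(n) = 2·ω(n) + 2. -/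
def Sset (n : ℕ) : Set ℕ :=
  {m : ℕ | 0 < m ∧ ∀ a : ℤ, ∃ q : ℕ, 1 ≤ q ∧ q ≤ m ∧ Int.gcd (a + q) n = 1}

lemma J_eq (n : ℕ) : J n = sInf (Sset n) := rfl

lemma self_mem_Sset (n : ℕ) (hn : 0 < n) : n ∈ Sset n := by
  refine ⟨hn, fun a => ?_⟩
  have hn' : (0:ℤ) < n := by exact_mod_cast hn
  have h1 : 0 ≤ (-a) % (n:ℤ) := Int.emod_nonneg _ (by positivity)
  have h2 : (-a) % (n:ℤ) < n := Int.emod_lt_of_pos _ hn'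
  refine ⟨((-a) % (n:ℤ)).toNat + 1, le_add_self, by omega, ?_⟩
  have hq : ((((-a) % (n:ℤ)).toNat + 1 : ℕ) : ℤ) = (-a) % (n:ℤ) + 1 := by
    push_cast [Int.toNat_of_nonneg h1]; ring
  rw [Int.isCoprime_iff_gcd_eq_one.symm, hq]
  exact ⟨1, (-a)/n, by linear_combination Int.emod_add_mul_ediv (-a) (n:ℤ)⟩

lemma Sset_nonempty (n : ℕ) (hn : 0 < n) : (Sset n).Nonempty := ⟨n, self_mem_Sset n hn⟩

lemma J_mem_s6 (n : ℕ) (hn : 0 < n) : J n ∈ Sset n := Nat.sInf_mem (Sset_nonempty n hn)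

lemma J_pos (n : ℕ) (hn : 0 < n) : 0 < J n := (J_mem_s6 n hn).1

lemma not_coprime_of_two_dvd {x y : ℤ} (hx : (2:ℤ) ∣ x) (hy : (2:ℤ) ∣ y) :
    ¬ IsCoprime x y := by
  intro h
  have := h.isUnit_of_dvd' hx hy
  rw [Int.isUnit_iff] at this
  omega

lemma J_two_mul (M : ℕ) (hM : Odd M) (h1 : 0 < M) : J (2 * M) = 2 * J M := by
  have hMZ : Odd (M:ℤ) := by exact_mod_cast hM
  obtain ⟨u, v, huv⟩ : IsCoprime (2:ℤ) (M:ℤ) := by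
    rw [← Int.isCoprime_iff_gcd_eq_one.symm]
    have h2 : Nat.Coprime 2 M := Nat.coprime_two_left.mpr hM
    rwa [show ((2:ℤ)) = ((2:ℕ):ℤ) from rfl, Int.gcd_natCast_natCast]
  obtain ⟨hJpos, hJ⟩ := J_mem_s6 M h1
  have hcast2M : ((2 * M : ℕ) : ℤ) = 2 * (M:ℤ) := by push_cast; ring
  -- upper bound: 2 * J M ∈ Sset (2 * M)
  have hup : 2 * J M ∈ Sset (2 * M) := by
    refine ⟨by omega, fun a => ?_⟩
    set t : ℕ := if Even a then 1 else 2 with ht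
    have htb : 1 ≤ t ∧ t ≤ 2 := by rw [ht]; split <;> omega
    have hodd : Odd (a + t) := by
      rcases Int.even_or_odd a with he | ho
      · simp only [ht, if_pos he]
        exact he.add_one
      · simp only [ht, if_neg (Int.not_even_iff_odd.mpr ho)]
        push_cast
        exact ho.add_even (by decide)
    obtain ⟨q', hq'1, hq'2, hg⟩ := hJ (u * (a + t - 2))
    rw [Int.isCoprime_iff_gcd_eq_one.symm] at hg
    refine ⟨t + 2 * (q' - 1), by omega, by omega, ?_⟩
    have hqcast : ((t + 2 * (q' - 1) : ℕ) : ℤ) = t + 2 * (q' : ℤ) - 2 := by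
      push_cast [Nat.cast_sub hq'1]; ring
    rw [Int.isCoprime_iff_gcd_eq_one.symm, hqcast]
    have hc2 : IsCoprime (a + ((t:ℤ) + 2 * (q':ℤ) - 2)) 2 := by
      obtain ⟨k, hk⟩ := hodd
      exact ⟨1, -(k + q' - 1), by linear_combination hk⟩
    have hcM : IsCoprime (a + ((t:ℤ) + 2 * (q':ℤ) - 2)) (M:ℤ) := by
      have h' := hg.add_mul_right_left (-((q':ℤ) * v))
      have heq : u * (a + (t:ℤ) - 2) + (q':ℤ) + (-((q':ℤ) * v)) * (M:ℤ)
          = u * (a + ((t:ℤ) + 2 * (q':ℤ) - 2)) := by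
        linear_combination (-(q':ℤ)) * huv
      rw [heq] at h'
      exact h'.of_mul_left_right
    rw [hcast2M]
    exact IsCoprime.mul_right hc2 hcM
  -- lower bound witness
  obtain ⟨a₁, ha₁⟩ : ∃ a₁ : ℤ, ∀ k : ℕ, 1 ≤ k → k ≤ J M - 1 → ¬ IsCoprime (a₁ + k) (M:ℤ) := by
    rcases Nat.lt_or_ge (J M) 2 with h | h
    · exact ⟨0, fun k hk1 hk2 => by omega⟩
    · have hnot : J M - 1 ∉ Sset M :=
        Nat.notMem_of_lt_sInf (s := Sset M) (by rw [← J_eq]; omega)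
      have hnot' : ¬ ∀ a : ℤ, ∃ q : ℕ, 1 ≤ q ∧ q ≤ J M - 1 ∧ Int.gcd (a + q) M = 1 := by
        intro hh; exact hnot ⟨by omega, hh⟩
      push_neg at hnot'
      obtain ⟨a₁, ha₁⟩ := hnot'
      refine ⟨a₁, fun k hk1 hk2 hc => ?_⟩
      exact ha₁ k hk1 hk2 (Int.isCoprime_iff_gcd_eq_one.symm.mpr hc)
  -- the bad run of length 2 * J M - 1
  have hbad : ∀ q : ℕ, 1 ≤ q → q ≤ 2 * J M - 1 →
      ¬ IsCoprime (2 * a₁ + (M:ℤ) + q) ((2 * M : ℕ) : ℤ) := by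
    intro q hq1 hq2 hc
    rw [hcast2M] at hc
    rcases Nat.even_or_odd q with he | ho
    · -- q even, q = 2k
      obtain ⟨k, hk⟩ := he
      have hk' : q = 2 * k := by omega
      have hkz : (q:ℤ) = 2 * k := by exact_mod_cast hk'
      have hk1 : 1 ≤ k := by omega
      have hk2 : k ≤ J M - 1 := by omega
      have hcM : IsCoprime (2 * a₁ + (M:ℤ) + q) (M:ℤ) := hc.of_mul_right_right
      have h' := hcM.add_mul_right_left (-1)
      have heq : 2 * a₁ + (M:ℤ) + (q:ℤ) + (-1) * (M:ℤ) = 2 * (a₁ + (k:ℤ)) := by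
        linear_combination hkz
      rw [heq] at h'
      exact ha₁ k hk1 hk2 h'.of_mul_left_right
    · -- q odd
      obtain ⟨j, hj⟩ := ho
      obtain ⟨m, hm⟩ := hMZ
      have hjz : (q:ℤ) = 2 * j + 1 := by exact_mod_cast hj
      refine not_coprime_of_two_dvd ⟨a₁ + m + j + 1, ?_⟩ ⟨(M:ℤ), by ring⟩ hc
      linear_combination hjz + hm
  -- conclude
  have hle : J (2 * M) ≤ 2 * J M := Nat.sInf_le hup
  have hge : 2 * J M ≤ J (2 * M) := by
    obtain ⟨hpos', hmem'⟩ := J_mem_s6 (2 * M) (by omega)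
    by_contra hlt
    push_neg at hlt
    obtain ⟨q, hq1, hq2, hg⟩ := hmem' (2 * a₁ + (M:ℤ))
    rw [Int.isCoprime_iff_gcd_eq_one.symm] at hg
    exact hbad q hq1 (by omega) hg
  omega

theorem stmt_6 (n : ℕ) (hn : 1 < n) :
    J (primorialP n) = 2 * (J (primorialP n / 2) - 1) + 2 := by
  obtain ⟨m, rfl⟩ : ∃ m, n = m + 1 := ⟨n - 1, by omega⟩
  set M : ℕ := ∏ i ∈ Finset.range m, Nat.nth Nat.Prime (i + 1) with hMdef
  have hP : primorialP (m + 1) = 2 * M := by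
    rw [primorialP, Finset.prod_range_succ', Nat.nth_prime_zero_eq_two, mul_comm]
  have hMpos : 0 < M := Finset.prod_pos fun i _ => (Nat.prime_nth_prime (i+1)).pos
  have hModd : Odd M := by
    refine Finset.prod_induction _ Odd (fun a b ha hb => ha.mul hb) odd_one fun i _ => ?_
    refine (Nat.prime_nth_prime (i+1)).odd_of_ne_two fun h2 => ?_
    have hlt : Nat.nth Nat.Prime 0 < Nat.nth Nat.Prime (i+1) :=
      (Nat.nth_lt_nth Nat.infinite_setOf_prime).mpr (by omega)
    rw [Nat.nth_prime_zero_eq_two, h2] at hlt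
    omega
  have hdiv : primorialP (m + 1) / 2 = M := by rw [hP]; omega
  rw [hdiv, hP, J_two_mul M hModd hMpos]
  have := J_pos M hMpos
  omega
end

section
/- Let m, k be positive integers with k ≥ 2, let p_2 < p_3 < … < p_k be the odd primes in order (p_2 = 3), and set r = 1 + ⌊(m−1)/p_k⌋. Define ν_max(m,k) as the maximum over a ∈ ℤ of the number of q ∈ {1,…,m} with p_k | a+q but p_i ∤ a+q for all 2 ≤ i ≤ k−1, and ψ_min(r,k−1) as the minimum over a ∈ ℤ of the number of q ∈ {1,…,r} with p_i | a+q for some 2 ≤ i ≤ k−1. Then ν_max(m,k) ≤ r − ψ_min(r,k−1). -/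
/-- `P i` is the `i`-th prime in the paper's indexing, so `P 1 = 2`, `P 2 = 3`, …;
for `i ≥ 2` these are the odd primes in increasing order. -/
noncomputable def P (i : ℕ) : ℕ := Nat.nth Nat.Prime (i - 1)

/-- `ψ a m k`: the number of `q ∈ {1,…,m}` such that `a + q` is divisible by one of
the odd primes `P 2, …, P k`. -/
noncomputable def psi (a : ℤ) (m k : ℕ) : ℕ :=
  ((Finset.Icc 1 m).filter
    (fun (q : ℕ) => ∃ i ∈ Finset.Icc 2 k, (P i : ℤ) ∣ (a + (q : ℤ)))).card

/-- `ψ_min m k = min over a ∈ ℤ of ψ a m k`. -/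
noncomputable def psiMin (m k : ℕ) : ℕ := sInf {c : ℕ | ∃ a : ℤ, c = psi a m k}

/-- `ν a m k`: the number of `q ∈ {1,…,m}` with `P k ∣ a + q` but `P i ∤ a + q`
for all `2 ≤ i ≤ k - 1`. -/
noncomputable def nu (a : ℤ) (m k : ℕ) : ℕ :=
  ((Finset.Icc 1 m).filter
    (fun (q : ℕ) => (P k : ℤ) ∣ (a + (q : ℤ)) ∧
      ∀ i ∈ Finset.Icc 2 (k - 1), ¬ (P i : ℤ) ∣ (a + (q : ℤ)))).card

/-- `ν_max m k = max over a ∈ ℤ of ν a m k`. -/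
noncomputable def nuMax (m k : ℕ) : ℕ := sSup {c : ℕ | ∃ a : ℤ, c = nu a m k}

theorem stmt_11 (m k : ℕ) (hm : 0 < m) (hk : 2 ≤ k) :
    nuMax m k ≤ (1 + (m - 1) / P k) - psiMin (1 + (m - 1) / P k) (k - 1) := by
  classical
  have hpp : (P k).Prime := Nat.prime_nth_prime _
  have hp0' : 0 < P k := hpp.pos
  set r : ℕ := 1 + (m - 1) / P k with hr
  have hmr : m ≤ P k * r := by
    have h1 := Nat.div_add_mod (m - 1) (P k)
    have h2 : (m - 1) % P k < P k := Nat.mod_lt _ hp0'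
    have h3 : P k * r = P k + P k * ((m - 1) / P k) := by rw [hr]; ring
    omega
  clear_value r
  clear hr
  have key : ∀ a : ℤ, nu a m k ≤ r - psiMin r (k - 1) := by
    intro a
    set p : ℤ := (P k : ℤ) with hpdef
    have hp0 : (0:ℤ) < p := by rw [hpdef]; exact_mod_cast hp0'
    set b : ℤ := a / p with hb
    have hpsi : psiMin r (k - 1) ≤ psi b r (k - 1) := Nat.sInf_le ⟨b, rfl⟩
    have hmod1 : 0 ≤ a % p := Int.emod_nonneg a (ne_of_gt hp0)
    have hmod2 : a % p < p := Int.emod_lt_of_pos a hp0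
    have heq0 : p * b + a % p = a := Int.mul_ediv_add_emod a p
    have hcard : nu a m k ≤ ((Finset.Icc 1 r).filter
        (fun j : ℕ => ¬ ∃ i ∈ Finset.Icc 2 (k - 1), (P i : ℤ) ∣ (b + (j : ℤ)))).card := by
      unfold nu
      refine Finset.card_le_card_of_injOn (fun q : ℕ => ((a + (q : ℤ)) / p - b).toNat) ?_ ?_
      · intro q hq
        simp only [Finset.mem_coe, Finset.mem_filter, Finset.mem_Icc] at hq ⊢
        obtain ⟨⟨hq1, hqm⟩, hdvd, hnot⟩ := hq
        set t : ℤ := (a + (q : ℤ)) / p with ht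
        have hpt : p * t = a + (q : ℤ) := Int.mul_ediv_cancel' hdvd
        have hq1' : (1:ℤ) ≤ (q:ℤ) := by exact_mod_cast hq1
        have hqm' : (q:ℤ) ≤ (m:ℤ) := by exact_mod_cast hqm
        have htb : b < t := by
          have : p * b < p * t := by omega
          exact lt_of_mul_lt_mul_left this (le_of_lt hp0)
        have hmr' : (m:ℤ) ≤ p * (r:ℤ) := by rw [hpdef]; exact_mod_cast hmr
        have hupper : t - b ≤ (r:ℤ) := by
          have h1 : p * (t - b) < p * ((r:ℤ) + 1) := by
            have e1 : p * (t - b) = p * t - p * b := by ring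
            have e2 : p * ((r:ℤ) + 1) = p * (r:ℤ) + p := by ring
            omega
          have := lt_of_mul_lt_mul_left h1 (le_of_lt hp0)
          omega
        have hjt : (((t - b).toNat : ℤ)) = t - b := Int.toNat_of_nonneg (by omega)
        refine ⟨⟨?_, ?_⟩, ?_⟩
        · omega
        · omega
        · rintro ⟨i, hi, hdvd'⟩
          apply hnot i hi
          have hbj : b + ((t - b).toNat : ℤ) = t := by omega
          rw [hbj] at hdvd'
          rw [← hpt]
          exact Dvd.dvd.mul_left hdvd' p
      · intro q1 h1 q2 h2 heq
        simp only [Finset.mem_coe, Finset.mem_filter, Finset.mem_Icc] at h1 h2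
        have hd1 : p * ((a + (q1 : ℤ)) / p) = a + q1 := Int.mul_ediv_cancel' h1.2.1
        have hd2 : p * ((a + (q2 : ℤ)) / p) = a + q2 := Int.mul_ediv_cancel' h2.2.1
        have hge1 : b ≤ (a + (q1 : ℤ)) / p := by
          have hq1' : (1:ℤ) ≤ (q1:ℤ) := by exact_mod_cast h1.1.1
          by_contra hlt
          push_neg at hlt
          have : p * ((a + (q1 : ℤ)) / p) < p * b := by
            exact mul_lt_mul_of_pos_left hlt hp0
          omega
        have hge2 : b ≤ (a + (q2 : ℤ)) / p := by
          have hq2' : (1:ℤ) ≤ (q2:ℤ) := by exact_mod_cast h2.1.1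
          by_contra hlt
          push_neg at hlt
          have : p * ((a + (q2 : ℤ)) / p) < p * b := by
            exact mul_lt_mul_of_pos_left hlt hp0
          omega
        simp only at heq
        have : (a + (q1 : ℤ)) / p = (a + (q2 : ℤ)) / p := by omega
        have : (q1 : ℤ) = (q2 : ℤ) := by
          have := congrArg (fun x => p * x) this
          simp only [hd1, hd2] at this
          omega
        exact_mod_cast this
    have hsplit :
        psi b r (k - 1) + ((Finset.Icc 1 r).filter
          (fun j : ℕ => ¬ ∃ i ∈ Finset.Icc 2 (k - 1), (P i : ℤ) ∣ (b + (j : ℤ)))).card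
          = r := by
      unfold psi
      rw [Finset.card_filter_add_card_filter_not, Nat.card_Icc]
      omega
    have h4 : nu a m k ≤ r - psi b r (k - 1) := by omega
    omega
  have hne : {c : ℕ | ∃ a : ℤ, c = nu a m k}.Nonempty := ⟨nu 0 m k, 0, rfl⟩
  apply csSup_le hne
  rintro x ⟨a, rfl⟩
  exact key a
end
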